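/- Let A be a bounded normal operator on a complex Hilbert space H and let T be the block operator matrix [[A + A*, −A*A], [I, 0]] on H ⊕ H. Then σ(T) = σ(A) ∪ σ(A*), where σ(A*) = {conj(z) : z ∈ σ(A)}. -/

import Mathlib

/-!
Since `A` is normal, `A` and `A*` commute, so `T` is the companion linearisation of the
commuting quadratic pencil `(z - A)(z - A*) = z² - z(A + A*) + A*A`. Elementary block row and
column operations (which are invertible) turn `z - T` into `diag((z - A)(z - A*), 1)`, so `z - T`
is invertible iff `(z - A)(z - A*)` is, iff both commuting factors are. Finally
`σ(a⋆) = σ(a)⋆` holds in any star algebra.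
-/

open scoped InnerProductSpace ComplexConjugate
open Complex ContinuousLinearMap

noncomputable section

variable {H : Type*} [NormedAddCommGroup H] [InnerProductSpace ℂ H] [CompleteSpace H]

/-- Block operator matrix `[[B11, B12],[B21, B22]]` on `E × E`. -/
def block2 {E : Type*} [NormedAddCommGroup E] [NormedSpace ℂ E]
    (B11 B12 B21 B22 : E →L[ℂ] E) : (E × E) →L[ℂ] (E × E) :=
  ((B11 ∘L ContinuousLinearMap.fst ℂ E E) + (B12 ∘L ContinuousLinearMap.snd ℂ E E)).prod
  ((B21 ∘L ContinuousLinearMap.fst ℂ E E) + (B22 ∘L ContinuousLinearMap.snd ℂ E E))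

/-- The linearisation `T = [[A + A*, −A*A],[I, 0]]` on `H × H`. -/
def blockT (A : H →L[ℂ] H) : (H × H) →L[ℂ] (H × H) :=
  block2 (A + ContinuousLinearMap.adjoint A) (-(ContinuousLinearMap.adjoint A * A)) 1 0

section Block

variable {E : Type*} [NormedAddCommGroup E] [NormedSpace ℂ E]

theorem block2_apply (a b c d : E →L[ℂ] E) (x : E × E) :
    block2 a b c d x = (a x.1 + b x.2, c x.1 + d x.2) := rfl

theorem block2_mul (a b c d a' b' c' d' : E →L[ℂ] E) :
    block2 a b c d * block2 a' b' c' d' =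
      block2 (a * a' + b * c') (a * b' + b * d') (c * a' + d * c') (c * b' + d * d') := by
  ext x <;> simp [block2_apply]

theorem block2_sub (a b c d a' b' c' d' : E →L[ℂ] E) :
    block2 a b c d - block2 a' b' c' d' = block2 (a - a') (b - b') (c - c') (d - d') := by
  ext x <;> simp [block2_apply]

theorem block2_one_zero_zero_one : block2 (1 : E →L[ℂ] E) 0 0 1 = 1 := by
  ext x <;> simp [block2_apply]

theorem algebraMap_eq_block2 (z : ℂ) :
    algebraMap ℂ ((E × E) →L[ℂ] (E × E)) z =
      block2 (algebraMap ℂ (E →L[ℂ] E) z) 0 0 (algebraMap ℂ (E →L[ℂ] E) z) := by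
  ext x <;> simp [block2_apply, Algebra.algebraMap_eq_smul_one]

theorem isUnit_block2_upperUnitriangular (a : E →L[ℂ] E) : IsUnit (block2 1 a 0 1) :=
  isUnit_iff_exists.2 ⟨block2 1 (-a) 0 1, by simpa [block2_mul] using block2_one_zero_zero_one,
    by simpa [block2_mul] using block2_one_zero_zero_one⟩

theorem isUnit_block2_swap : IsUnit (block2 (0 : E →L[ℂ] E) (-1) 1 0) :=
  isUnit_iff_exists.2 ⟨block2 0 1 (-1) 0, by simpa [block2_mul] using block2_one_zero_zero_one,
    by simpa [block2_mul] using block2_one_zero_zero_one⟩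

theorem isUnit_block2_diag_one_iff {s : E →L[ℂ] E} : IsUnit (block2 s 0 0 1) ↔ IsUnit s := by
  constructor
  · intro hD
    obtain ⟨n, hDn, hnD⟩ := isUnit_iff_exists.1 hD
    -- the compression of the inverse to the first summand inverts `s`
    refine isUnit_iff_exists.2 ⟨fst ℂ E E ∘L n ∘L inl ℂ E E, ?_, ?_⟩ <;> ext x
    · simpa [block2_apply] using congr_arg (fun y => y.1) (congr($hDn (x, 0)))
    · simpa [block2_apply] using congr_arg (fun y => y.1) (congr($hnD (x, 0)))
  · intro hs
    obtain ⟨r, hsr, hrs⟩ := isUnit_iff_exists.1 hs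
    exact isUnit_iff_exists.2 ⟨block2 r 0 0 1, by simpa [block2_mul, hsr] using
      block2_one_zero_zero_one, by simpa [block2_mul, hrs] using block2_one_zero_zero_one⟩

theorem isUnit_block2_neg_one_iff (a b c : E →L[ℂ] E) :
    IsUnit (block2 a b (-1) c) ↔ IsUnit (a * c + b) := by
  have hreduce : block2 1 a 0 1 * block2 a b (-1) c * block2 1 c 0 1 * block2 0 (-1) 1 0 =
      block2 (a * c + b) 0 0 1 := by
    simp [block2_mul, add_comm]
  rw [← isUnit_block2_diag_one_iff (s := a * c + b), ← hreduce,
    isUnit_block2_swap.mul_right_iff, (isUnit_block2_upperUnitriangular c).mul_right_iff,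
    (isUnit_block2_upperUnitriangular a).mul_left_iff]

theorem spectrum_block2_of_commute {a b : E →L[ℂ] E} (hab : Commute a b) :
    spectrum ℂ (block2 (a + b) (-(b * a)) 1 0) = spectrum ℂ a ∪ spectrum ℂ b := by
  ext z
  simp only [spectrum.mem_iff, Set.mem_union, algebraMap_eq_block2, block2_sub, sub_zero,
    sub_neg_eq_add, zero_sub, zero_add, ← not_and_or, not_iff_not]
  set w := algebraMap ℂ (E →L[ℂ] E) z
  have hpencil : (w - (a + b)) * w + b * a = (w - a) * (w - b) := by
    simp only [sub_mul, mul_sub, add_mul, w, Algebra.commutes, hab.eq]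
    abel
  have hfactors : Commute (w - a) (w - b) :=
    ((Algebra.commute_algebraMap_left z (w - b)).sub_left
      ((Algebra.commute_algebraMap_right z a).sub_right hab))
  rw [isUnit_block2_neg_one_iff, hpencil, hfactors.isUnit_mul_iff]

end Block

/-- Lemma 3.1 (first part): `σ(T) = σ(A) ∪ σ(A*)`, where `σ(A*)` is the set of conjugates
of points of `σ(A)`. -/
theorem stmt7 (A : H →L[ℂ] H) (hA : IsStarNormal A) :
    spectrum ℂ (blockT A) = spectrum ℂ A ∪ spectrum ℂ (ContinuousLinearMap.adjoint A) ∧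
      spectrum ℂ (ContinuousLinearMap.adjoint A) = (fun z => conj z) '' spectrum ℂ A := by
  rw [← star_eq_adjoint]
  refine ⟨spectrum_block2_of_commute hA.star_comm_self.symm, ?_⟩
  rw [spectrum.map_star, ← Set.image_star]
  rfl

end
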